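/- arXiv:2602.05011 — 5 statements merged into one kernel-verified Lean document; each statement's English description precedes it below -/
import Mathlib

section
/- Let n ≥ 1, let μ be a probability measure on ℝⁿ with density ρ with respect to Lebesgue measure, let d > 0, and suppose ρ(x) ≤ C for Lebesgue-almost every x, where C ≥ 0. Then H^d(μ) ≤ C · vol(B_d), where vol(B_d) is the Lebesgue measure of the closed ball of radius d in ℝⁿ. In particular, if ε > 0 and C ≤ ε / vol(B_d), then H^d(μ) ≤ ε. -/
open MeasureTheory Metric Set
open scoped ENNReal

/-- Congestion condition: if the swarm density `ρ` is bounded a.e. by `C`, then the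
conflict functional satisfies `H^d(μ) ≤ C · vol(B_d)`; in particular, if
`C ≤ ε / vol(B_d)` with `ε > 0`, then `H^d(μ) ≤ ε`. -/
theorem conflict_functional_le_of_density_bound
    (n : ℕ) (hn : 1 ≤ n)
    (ρ : EuclideanSpace ℝ (Fin n) → ℝ≥0∞)
    (μ : Measure (EuclideanSpace ℝ (Fin n)))
    (hμ : μ = volume.withDensity ρ) [IsProbabilityMeasure μ]
    (d : ℝ) (hd : 0 < d) (C : ℝ) (hC : 0 ≤ C)
    (hbound : ∀ᵐ x ∂(volume : Measure (EuclideanSpace ℝ (Fin n))),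
      ρ x ≤ ENNReal.ofReal C) :
    ((μ.prod μ)
        {p : EuclideanSpace ℝ (Fin n) × EuclideanSpace ℝ (Fin n) | ‖p.1 - p.2‖ ≤ d}).toReal
      ≤ C * (volume (Metric.closedBall (0 : EuclideanSpace ℝ (Fin n)) d)).toReal ∧
    ∀ ε : ℝ, 0 < ε →
      C ≤ ε / (volume (Metric.closedBall (0 : EuclideanSpace ℝ (Fin n)) d)).toReal →
      ((μ.prod μ)
        {p : EuclideanSpace ℝ (Fin n) × EuclideanSpace ℝ (Fin n) | ‖p.1 - p.2‖ ≤ d}).toReal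
        ≤ ε := by
  have hE : True := trivial
  set v : ℝ≥0∞ := volume (Metric.closedBall (0 : EuclideanSpace ℝ (Fin n)) d) with hv
  have hvlt : v < ⊤ := measure_closedBall_lt_top
  have hvpos : 0 < v := measure_closedBall_pos volume 0 hd
  have hS : MeasurableSet {p : EuclideanSpace ℝ (Fin n) × EuclideanSpace ℝ (Fin n) | ‖p.1 - p.2‖ ≤ d} := by
    apply measurableSet_le
    · exact (continuous_fst.sub continuous_snd).norm.measurable
    · exact measurable_const
  -- bound μ of each ball
  have hball : ∀ x : EuclideanSpace ℝ (Fin n), μ (Metric.closedBall x d) ≤ ENNReal.ofReal C * v := by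
    intro x
    rw [hμ, withDensity_apply _ measurableSet_closedBall]
    calc ∫⁻ y in Metric.closedBall x d, ρ y
        ≤ ∫⁻ _ in Metric.closedBall x d, ENNReal.ofReal C :=
          lintegral_mono_ae (ae_restrict_of_ae hbound)
      _ = ENNReal.ofReal C * volume (Metric.closedBall x d) := by
          rw [setLIntegral_const]
      _ = ENNReal.ofReal C * v := by
          rw [Measure.addHaar_closedBall_center]
  have key : (μ.prod μ)
      {p : EuclideanSpace ℝ (Fin n) × EuclideanSpace ℝ (Fin n) | ‖p.1 - p.2‖ ≤ d} ≤ ENNReal.ofReal C * v := by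
    rw [Measure.prod_apply hS]
    have : ∀ x : EuclideanSpace ℝ (Fin n), μ (Prod.mk x ⁻¹' {p : EuclideanSpace ℝ (Fin n) × EuclideanSpace ℝ (Fin n) | ‖p.1 - p.2‖ ≤ d})
        ≤ ENNReal.ofReal C * v := by
      intro x
      have : Prod.mk x ⁻¹' {p : EuclideanSpace ℝ (Fin n) × EuclideanSpace ℝ (Fin n) | ‖p.1 - p.2‖ ≤ d} = Metric.closedBall x d := by
        ext y
        simp [Metric.mem_closedBall, dist_eq_norm, dist_comm]
        rw [norm_sub_rev]
      rw [this]
      exact hball x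
    calc ∫⁻ x, μ (Prod.mk x ⁻¹' {p : EuclideanSpace ℝ (Fin n) × EuclideanSpace ℝ (Fin n) | ‖p.1 - p.2‖ ≤ d}) ∂μ
        ≤ ∫⁻ _, ENNReal.ofReal C * v ∂μ := lintegral_mono this
      _ = ENNReal.ofReal C * v := by simp
  have hmain : ((μ.prod μ) {p : EuclideanSpace ℝ (Fin n) × EuclideanSpace ℝ (Fin n) | ‖p.1 - p.2‖ ≤ d}).toReal ≤ C * v.toReal := by
    have h1 : ((μ.prod μ) {p : EuclideanSpace ℝ (Fin n) × EuclideanSpace ℝ (Fin n) | ‖p.1 - p.2‖ ≤ d}).toReal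
        ≤ (ENNReal.ofReal C * v).toReal := by
      apply ENNReal.toReal_mono _ key
      exact ENNReal.mul_ne_top ENNReal.ofReal_ne_top hvlt.ne
    rwa [ENNReal.toReal_mul, ENNReal.toReal_ofReal hC] at h1
  refine ⟨hmain, fun ε hε hCε => ?_⟩
  have hvr : 0 < v.toReal := ENNReal.toReal_pos hvpos.ne' hvlt.ne
  calc ((μ.prod μ) {p : EuclideanSpace ℝ (Fin n) × EuclideanSpace ℝ (Fin n) | ‖p.1 - p.2‖ ≤ d}).toReal
      ≤ C * v.toReal := hmain
    _ ≤ (ε / v.toReal) * v.toReal := by nlinarith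
    _ = ε := div_mul_cancel₀ ε hvr.ne'
end

section
/- Let h : ℝ → ℝ be differentiable on [0, ∞) and let α : ℝ → ℝ be continuous, strictly monotone increasing, and satisfy α(0) = 0. Assume h(0) ≥ 0 and h'(t) ≥ −α(h(t)) for all t ≥ 0. Then h(t) ≥ 0 for all t ≥ 0. -/
open Set

/-- Scalar barrier-function invariance: if `h(0) ≥ 0` and `h'(t) ≥ −α(h(t))` for all
`t ≥ 0`, with `α` continuous, strictly increasing and `α(0) = 0`, then `h(t) ≥ 0`
for all `t ≥ 0`. -/
theorem scalar_cbf_forward_invariance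
    (h h' : ℝ → ℝ) (α : ℝ → ℝ)
    (hdiff : ∀ t ∈ Set.Ici (0 : ℝ), HasDerivWithinAt h (h' t) (Set.Ici 0) t)
    (hαc : Continuous α) (hαmono : StrictMono α) (hα0 : α 0 = 0)
    (h0 : 0 ≤ h 0)
    (hineq : ∀ t ≥ (0 : ℝ), -α (h t) ≤ h' t) :
    ∀ t ≥ (0 : ℝ), 0 ≤ h t := by
  by_contra hc
  push_neg at hc
  obtain ⟨t₀, ht₀, hneg⟩ := hc
  have hcont : ContinuousOn h (Set.Ici 0) := fun t ht =>
    (hdiff t ht).continuousWithinAt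
  have ht₀pos : 0 < t₀ := by
    rcases lt_or_eq_of_le ht₀ with hlt | heq
    · exact hlt
    · exact absurd (heq ▸ h0) (not_le.mpr hneg)
  set S : Set ℝ := Set.Icc 0 t₀ ∩ h ⁻¹' Set.Ici 0 with hS
  have hScl : IsClosed S :=
    (hcont.mono Set.Icc_subset_Ici_self).preimage_isClosed_of_isClosed
      isClosed_Icc isClosed_Ici
  have hSne : S.Nonempty := ⟨0, ⟨le_refl 0, le_of_lt ht₀pos⟩, h0⟩
  have hScomp : IsCompact S :=
    isCompact_Icc.of_isClosed_subset hScl Set.inter_subset_left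
  set s := sSup S with hs
  have hsS : s ∈ S := hScomp.sSup_mem hSne
  obtain ⟨⟨hs0, hst₀⟩, hhs⟩ := hsS
  have hslt : s < t₀ := by
    rcases lt_or_eq_of_le hst₀ with hlt | heq
    · exact hlt
    · exact absurd (heq ▸ hhs) (not_le.mpr hneg)
  -- on (s, t₀], h < 0
  have hlt_neg : ∀ t, s < t → t ≤ t₀ → h t < 0 := by
    intro t hst htt₀
    by_contra hge
    push_neg at hge
    have : t ∈ S := ⟨⟨le_trans hs0 (le_of_lt hst), htt₀⟩, hge⟩
    exact absurd (le_csSup hScomp.bddAbove this) (not_le.mpr hst)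
  -- h is monotone on [s, t₀]
  have hmono : MonotoneOn h (Set.Icc s t₀) := by
    apply monotoneOn_of_deriv_nonneg (convex_Icc s t₀)
      (hcont.mono (fun x hx => le_trans hs0 hx.1))
    · intro t ht
      rw [interior_Icc] at ht
      have htpos : 0 < t := lt_of_le_of_lt hs0 ht.1
      exact ((hdiff t (le_of_lt htpos)).hasDerivAt
        (Ici_mem_nhds htpos)).differentiableAt.differentiableWithinAt
    · intro t ht
      rw [interior_Icc] at ht
      have htpos : 0 < t := lt_of_le_of_lt hs0 ht.1
      have hd := (hdiff t (le_of_lt htpos)).hasDerivAt (Ici_mem_nhds htpos)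
      rw [hd.deriv]
      have hht : h t < 0 := hlt_neg t ht.1 (le_of_lt ht.2)
      have : α (h t) < α 0 := hαmono hht
      rw [hα0] at this
      have : 0 ≤ -α (h t) := by linarith
      exact le_trans this (hineq t (le_of_lt htpos))
  have hhs' : 0 ≤ h s := hhs
  have := hmono ⟨le_refl s, hst₀⟩ ⟨le_of_lt hslt, le_refl t₀⟩ hst₀
  linarith
end

section
/- Let X be a nonempty set, let H : [0, ∞) × X → ℝ be such that for every x ∈ X the function t ↦ H(t, x) is differentiable on [0, ∞), and let α : X → (ℝ → ℝ) assign to each x ∈ X a continuous, strictly monotone increasing function α_x with α_x(0) = 0. Assume H(0, x) ≥ 0 for all x ∈ X, and ∂H/∂t (t, x) ≥ −α_x(H(t, x)) for all t ≥ 0 and all x ∈ X. Then H(t, x) ≥ 0 for all t ≥ 0 and all x ∈ X. -/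
open Set

/-- Pointwise (function-space codomain) barrier-function invariance: if
`H(0, x) ≥ 0` for all `x` and `∂H/∂t (t, x) ≥ −α_x(H(t, x))` for all `t ≥ 0` and
all `x`, with each `α_x` continuous, strictly increasing and `α_x(0) = 0`, then
`H(t, x) ≥ 0` for all `t ≥ 0` and all `x`. -/
theorem pointwise_cbf_forward_invariance
    {X : Type*} [Nonempty X]
    (H : ℝ → X → ℝ) (H' : ℝ → X → ℝ) (α : X → ℝ → ℝ)
    (hdiff : ∀ x : X, ∀ t ∈ Set.Ici (0 : ℝ),
      HasDerivWithinAt (fun s => H s x) (H' t x) (Set.Ici 0) t)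
    (hαc : ∀ x : X, Continuous (α x))
    (hαmono : ∀ x : X, StrictMono (α x))
    (hα0 : ∀ x : X, α x 0 = 0)
    (h0 : ∀ x : X, 0 ≤ H 0 x)
    (hineq : ∀ t ≥ (0 : ℝ), ∀ x : X, -(α x (H t x)) ≤ H' t x) :
    ∀ t ≥ (0 : ℝ), ∀ x : X, 0 ≤ H t x := by
  intro t₀ ht₀ x
  by_contra hneg
  push_neg at hneg
  set h : ℝ → ℝ := fun s => H s x with hh
  have hcont : ContinuousOn h (Set.Ici 0) := fun t ht =>
    (hdiff x t ht).continuousWithinAt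
  -- t₀ > 0
  have ht₀pos : 0 < t₀ := by
    rcases lt_or_eq_of_le ht₀ with h' | h'
    · exact h'
    · exact absurd hneg (by simp [h, ← h', not_lt.2 (h0 x)])
  set S : Set ℝ := {t | t ∈ Set.Icc (0:ℝ) t₀ ∧ 0 ≤ h t} with hS
  have hSne : S.Nonempty := ⟨0, ⟨le_refl 0, le_of_lt ht₀pos⟩, h0 x⟩
  have hSbdd : BddAbove S := ⟨t₀, fun y hy => hy.1.2⟩
  have hScl : IsClosed S := by
    have : S = Set.Icc (0:ℝ) t₀ ∩ h ⁻¹' (Set.Ici 0) ∩ Set.Icc (0:ℝ) t₀ := by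
      ext y; simp [hS, and_comm, and_assoc]; tauto
    rw [this]
    exact (((hcont.mono (fun y hy => hy.1)).preimage_isClosed_of_isClosed
      isClosed_Icc isClosed_Ici).inter isClosed_Icc)
  set s := sSup S with hs
  have hsS : s ∈ S := hScl.csSup_mem hSne hSbdd
  have hs0 : 0 ≤ s := hsS.1.1
  have hst₀ : s ≤ t₀ := hsS.1.2
  have hhs : 0 ≤ h s := hsS.2
  have hslt : s < t₀ := by
    rcases lt_or_eq_of_le hst₀ with h' | h'
    · exact h'
    · exfalso; have := hhs; rw [h'] at this; exact absurd this (not_le.2 hneg)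
  -- on (s, t₀], h < 0
  have hlt : ∀ u ∈ Set.Ioc s t₀, h u < 0 := by
    intro u hu
    by_contra hge
    push_neg at hge
    have : u ∈ S := ⟨⟨le_trans hs0 hu.1.le, hu.2⟩, hge⟩
    exact absurd (le_csSup hSbdd this) (not_le.2 hu.1)
  -- h is strictly monotone on [s, t₀]
  have hsub : Set.Icc s t₀ ⊆ Set.Ici (0:ℝ) := fun y hy => le_trans hs0 hy.1
  have hmono : StrictMonoOn h (Set.Icc s t₀) := by
    apply strictMonoOn_of_hasDerivWithinAt_pos (convex_Icc s t₀)
      (hcont.mono hsub) (f' := fun u => H' u x)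
    · intro u hu
      rw [interior_Icc] at hu
      exact ((hdiff x u (hsub (Set.Ioo_subset_Icc_self hu))).mono
        (fun y hy => hsub (Set.Ioo_subset_Icc_self hy))).mono
        (by rw [interior_Icc])
    · intro u hu
      rw [interior_Icc] at hu
      have hu0 : 0 ≤ u := le_trans hs0 hu.1.le
      have hneg' : h u < 0 := hlt u ⟨hu.1, hu.2.le⟩
      have : α x (h u) < 0 := by
        have := (hαmono x) hneg'
        rwa [hα0 x] at this
      calc (0:ℝ) < -(α x (h u)) := by linarith
        _ ≤ H' u x := hineq u hu0 x
  have := hmono (Set.left_mem_Icc.2 hst₀) (Set.right_mem_Icc.2 hst₀) hslt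
  linarith
end

section
/- Let n ≥ 1, let ρ : ℝ × ℝⁿ → ℝ and u : ℝ × ℝⁿ → ℝⁿ be continuously differentiable and satisfy ∂_t ρ(t, x) + ∇·(ρ(t, x) u(t, x)) = 0 for all (t, x), where ∇· is the spatial divergence. Assume there is a compact set K ⊆ ℝⁿ such that ρ(t, x) = 0 for all t and all x ∉ K. Fix d > 0. Then the function G(t) = ∫_{ℝⁿ×ℝⁿ} 1_{‖x−y‖ ≤ d} ρ(t, x) ρ(t, y) dx dy is differentiable in t, with G'(t) = −2 ∫_{ℝⁿ×ℝⁿ} 1_{‖x−y‖ ≤ d} ρ(t, y) (∇·(ρ u))(t, x) dx dy. -/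
open MeasureTheory Set

/-- Spatial divergence of a vector field on `ℝⁿ`. -/
noncomputable def divergence (n : ℕ)
    (v : EuclideanSpace ℝ (Fin n) → EuclideanSpace ℝ (Fin n))
    (x : EuclideanSpace ℝ (Fin n)) : ℝ :=
  ∑ i : Fin n, fderiv ℝ v x (EuclideanSpace.single i 1) i

/-- Time derivative of the conflict-avoidance functional
`G(t) = ∬ 1_{‖x−y‖ ≤ d} ρ(t,x) ρ(t,y) dx dy` along the continuity equation
`∂_t ρ + ∇·(ρ u) = 0`:
`G'(t) = −2 ∬ 1_{‖x−y‖ ≤ d} ρ(t,y) ∇·(ρ u)(t,x) dx dy`. -/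
theorem conflict_functional_time_derivative
    (n : ℕ) (hn : 1 ≤ n)
    (ρ : ℝ → EuclideanSpace ℝ (Fin n) → ℝ)
    (u : ℝ → EuclideanSpace ℝ (Fin n) → EuclideanSpace ℝ (Fin n))
    (hρ : ContDiff ℝ 1 (fun p : ℝ × EuclideanSpace ℝ (Fin n) => ρ p.1 p.2))
    (hu : ContDiff ℝ 1 (fun p : ℝ × EuclideanSpace ℝ (Fin n) => u p.1 p.2))
    (hpde : ∀ (t : ℝ) (x : EuclideanSpace ℝ (Fin n)),
      deriv (fun s => ρ s x) t + divergence n (fun y => ρ t y • u t y) x = 0)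
    (K : Set (EuclideanSpace ℝ (Fin n))) (hK : IsCompact K)
    (hsupp : ∀ (t : ℝ) (x : EuclideanSpace ℝ (Fin n)), x ∉ K → ρ t x = 0)
    (d : ℝ) (hd : 0 < d) :
    ∀ t : ℝ, HasDerivAt
      (fun s => ∫ p : EuclideanSpace ℝ (Fin n) × EuclideanSpace ℝ (Fin n),
        Set.indicator {q : EuclideanSpace ℝ (Fin n) × EuclideanSpace ℝ (Fin n) |
            ‖q.1 - q.2‖ ≤ d} (fun _ => (1 : ℝ)) p * (ρ s p.1 * ρ s p.2))
      (-2 * ∫ p : EuclideanSpace ℝ (Fin n) × EuclideanSpace ℝ (Fin n),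
        Set.indicator {q : EuclideanSpace ℝ (Fin n) × EuclideanSpace ℝ (Fin n) |
            ‖q.1 - q.2‖ ≤ d} (fun _ => (1 : ℝ)) p *
          (ρ t p.2 * divergence n (fun y => ρ t y • u t y) p.1)) t := by
  intro t
  -- time derivative of ρ
  set ρt : ℝ → EuclideanSpace ℝ (Fin n) → ℝ := fun s x => deriv (fun s' => ρ s' x) s with hρt_def
  have hderiv : ∀ (s : ℝ) (x : EuclideanSpace ℝ (Fin n)), HasDerivAt (fun s' => ρ s' x)
      (fderiv ℝ (fun p : ℝ × EuclideanSpace ℝ (Fin n) => ρ p.1 p.2) (s, x) (1, 0)) s := by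
    intro s x
    have h1 : HasFDerivAt (fun p : ℝ × EuclideanSpace ℝ (Fin n) => ρ p.1 p.2)
        (fderiv ℝ (fun p : ℝ × EuclideanSpace ℝ (Fin n) => ρ p.1 p.2) (s, x)) (s, x) :=
      (hρ.differentiable one_ne_zero).differentiableAt.hasFDerivAt
    have h2 : HasDerivAt (fun s' : ℝ => ((s', x) : ℝ × EuclideanSpace ℝ (Fin n))) (1, 0) s :=
      (hasDerivAt_id s).prodMk (hasDerivAt_const s x)
    exact h1.comp_hasDerivAt s h2
  have hρt_eq : ∀ (s : ℝ) (x : EuclideanSpace ℝ (Fin n)),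
      ρt s x = fderiv ℝ (fun p : ℝ × EuclideanSpace ℝ (Fin n) => ρ p.1 p.2) (s, x) (1, 0) :=
    fun s x => (hderiv s x).deriv
  have hderiv' : ∀ (s : ℝ) (x : EuclideanSpace ℝ (Fin n)), HasDerivAt (fun s' => ρ s' x) (ρt s x) s := by
    intro s x; rw [hρt_eq]; exact hderiv s x
  have hρt_cont : Continuous (fun q : ℝ × EuclideanSpace ℝ (Fin n) => ρt q.1 q.2) := by
    have : Continuous (fun q : ℝ × EuclideanSpace ℝ (Fin n) =>
        fderiv ℝ (fun p : ℝ × EuclideanSpace ℝ (Fin n) => ρ p.1 p.2) q (1, 0)) :=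
      (hρ.continuous_fderiv one_ne_zero).clm_apply continuous_const
    refine this.congr ?_
    intro q; rw [hρt_eq q.1 q.2]
  have hρ_cont : Continuous (fun q : ℝ × EuclideanSpace ℝ (Fin n) => ρ q.1 q.2) := hρ.continuous
  have hρt_supp : ∀ (s : ℝ) (x : EuclideanSpace ℝ (Fin n)), x ∉ K → ρt s x = 0 := by
    intro s x hx
    have : (fun s' => ρ s' x) = fun _ => (0 : ℝ) := funext fun s' => hsupp s' x hx
    simp [hρt_def, this]
  -- the set S and basic facts
  set S : Set ((EuclideanSpace ℝ (Fin n)) × (EuclideanSpace ℝ (Fin n))) := {q : (EuclideanSpace ℝ (Fin n)) × (EuclideanSpace ℝ (Fin n)) | ‖q.1 - q.2‖ ≤ d} with hS_def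
  have hS_meas : MeasurableSet S :=
    (isClosed_le ((continuous_fst.sub continuous_snd).norm) continuous_const).measurableSet
  have hind : ∀ (h : (EuclideanSpace ℝ (Fin n)) × (EuclideanSpace ℝ (Fin n)) → ℝ) (p : (EuclideanSpace ℝ (Fin n)) × (EuclideanSpace ℝ (Fin n))),
      S.indicator (fun _ => (1 : ℝ)) p * h p = S.indicator h p := by
    intro h p
    by_cases hp : p ∈ S <;> simp [hp]
  -- the compact square
  have hKK : IsCompact (K ×ˢ K) := hK.prod hK
  have hKK_meas : MeasurableSet (K ×ˢ K) := hKK.isClosed.measurableSet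
  -- integrands
  set g : ℝ → (EuclideanSpace ℝ (Fin n)) × (EuclideanSpace ℝ (Fin n)) → ℝ := fun s p => ρ s p.1 * ρ s p.2 with hg_def
  set g' : ℝ → (EuclideanSpace ℝ (Fin n)) × (EuclideanSpace ℝ (Fin n)) → ℝ := fun s p => ρt s p.1 * ρ s p.2 + ρ s p.1 * ρt s p.2 with hg'_def
  have hg_cont : ∀ s, Continuous (g s) := by
    intro s
    exact (hρ_cont.comp (continuous_const.prodMk continuous_fst)).mul
      (hρ_cont.comp (continuous_const.prodMk continuous_snd))
  have hg'_contj : Continuous (fun q : ℝ × ((EuclideanSpace ℝ (Fin n)) × (EuclideanSpace ℝ (Fin n))) => g' q.1 q.2) := by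
    have c1 : Continuous (fun q : ℝ × ((EuclideanSpace ℝ (Fin n)) × (EuclideanSpace ℝ (Fin n))) => ρt q.1 q.2.1) :=
      hρt_cont.comp (continuous_fst.prodMk (continuous_fst.comp continuous_snd))
    have c2 : Continuous (fun q : ℝ × ((EuclideanSpace ℝ (Fin n)) × (EuclideanSpace ℝ (Fin n))) => ρ q.1 q.2.2) :=
      hρ_cont.comp (continuous_fst.prodMk (continuous_snd.comp continuous_snd))
    have c3 : Continuous (fun q : ℝ × ((EuclideanSpace ℝ (Fin n)) × (EuclideanSpace ℝ (Fin n))) => ρ q.1 q.2.1) :=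
      hρ_cont.comp (continuous_fst.prodMk (continuous_fst.comp continuous_snd))
    have c4 : Continuous (fun q : ℝ × ((EuclideanSpace ℝ (Fin n)) × (EuclideanSpace ℝ (Fin n))) => ρt q.1 q.2.2) :=
      hρt_cont.comp (continuous_fst.prodMk (continuous_snd.comp continuous_snd))
    exact (c1.mul c2).add (c3.mul c4)
  have hg'_cont : ∀ s, Continuous (g' s) :=
    fun s => hg'_contj.comp (continuous_const.prodMk continuous_id)
  have hg_zero : ∀ (s : ℝ) (p : (EuclideanSpace ℝ (Fin n)) × (EuclideanSpace ℝ (Fin n))), p ∉ K ×ˢ K → g s p = 0 := by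
    intro s p hp
    rw [Set.mem_prod] at hp
    push_neg at hp
    by_cases h1 : p.1 ∈ K
    · simp [hg_def, hsupp s p.2 (hp h1)]
    · simp [hg_def, hsupp s p.1 h1]
  have hg'_zero : ∀ (s : ℝ) (p : (EuclideanSpace ℝ (Fin n)) × (EuclideanSpace ℝ (Fin n))), p ∉ K ×ˢ K → g' s p = 0 := by
    intro s p hp
    rw [Set.mem_prod] at hp
    push_neg at hp
    by_cases h1 : p.1 ∈ K
    · simp [hg'_def, hsupp s p.2 (hp h1), hρt_supp s p.2 (hp h1)]
    · simp [hg'_def, hsupp s p.1 h1, hρt_supp s p.1 h1]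
  have hg_int : ∀ s, Integrable (g s) := by
    intro s
    refine (hg_cont s).integrable_of_hasCompactSupport ?_
    exact HasCompactSupport.intro hKK (hg_zero s)
  have hg'_int : ∀ s, Integrable (g' s) := by
    intro s
    refine (hg'_cont s).integrable_of_hasCompactSupport ?_
    exact HasCompactSupport.intro hKK (hg'_zero s)
  -- summands of g'
  set A : (EuclideanSpace ℝ (Fin n)) × (EuclideanSpace ℝ (Fin n)) → ℝ := fun p => ρt t p.1 * ρ t p.2 with hA_def
  set B : (EuclideanSpace ℝ (Fin n)) × (EuclideanSpace ℝ (Fin n)) → ℝ := fun p => ρ t p.1 * ρt t p.2 with hB_def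
  have hA_int : Integrable (S.indicator A) := by
    refine Integrable.indicator ?_ hS_meas
    refine Continuous.integrable_of_hasCompactSupport ?_ (HasCompactSupport.intro hKK ?_)
    · exact ((hρt_cont.comp (continuous_const.prodMk continuous_fst)).mul
        (hρ_cont.comp (continuous_const.prodMk continuous_snd)))
    · intro p hp
      rw [Set.mem_prod] at hp
      push_neg at hp
      by_cases h1 : p.1 ∈ K
      · simp [hA_def, hsupp t p.2 (hp h1)]
      · simp [hA_def, hρt_supp t p.1 h1]
  have hB_int : Integrable (S.indicator B) := by
    refine Integrable.indicator ?_ hS_meas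
    refine Continuous.integrable_of_hasCompactSupport ?_ (HasCompactSupport.intro hKK ?_)
    · exact ((hρ_cont.comp (continuous_const.prodMk continuous_fst)).mul
        (hρt_cont.comp (continuous_const.prodMk continuous_snd)))
    · intro p hp
      rw [Set.mem_prod] at hp
      push_neg at hp
      by_cases h1 : p.1 ∈ K
      · simp [hB_def, hρt_supp t p.2 (hp h1)]
      · simp [hB_def, hsupp t p.1 h1]
  -- bound
  obtain ⟨C, hC⟩ : ∃ C : ℝ, ∀ q ∈ (Set.Icc (t - 1) (t + 1)) ×ˢ (K ×ˢ K),
      ‖g' q.1 q.2‖ ≤ C :=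
    (isCompact_Icc.prod hKK).exists_bound_of_continuousOn hg'_contj.continuousOn
  set bound : (EuclideanSpace ℝ (Fin n)) × (EuclideanSpace ℝ (Fin n)) → ℝ := (K ×ˢ K).indicator (fun _ => C) with hbound_def
  have hbound_int : Integrable bound := by
    rw [hbound_def, integrable_indicator_iff hKK_meas]
    exact integrableOn_const hKK.measure_lt_top.ne
  have h_bound : ∀ᵐ p : (EuclideanSpace ℝ (Fin n)) × (EuclideanSpace ℝ (Fin n)), ∀ s ∈ Metric.ball t 1,
      ‖S.indicator (g' s) p‖ ≤ bound p := by
    refine Filter.Eventually.of_forall (fun p s hs => ?_)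
    have hnorm : ‖S.indicator (g' s) p‖ ≤ ‖g' s p‖ := by
      by_cases hp : p ∈ S <;> simp [hp]
    by_cases hpK : p ∈ K ×ˢ K
    · refine hnorm.trans ?_
      have : (s, p) ∈ (Set.Icc (t - 1) (t + 1)) ×ˢ (K ×ˢ K) := by
        constructor
        · rw [Metric.mem_ball, Real.dist_eq] at hs
          constructor <;> [linarith [abs_lt.1 hs]; linarith [abs_lt.1 hs]]
        · exact hpK
      have := hC (s, p) this
      simpa [hbound_def, Set.indicator_of_mem hpK] using this
    · rw [hbound_def, Set.indicator_of_notMem hpK]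
      refine hnorm.trans ?_
      rw [hg'_zero s p hpK]
      simp
  -- differentiability pointwise
  have h_diff : ∀ᵐ p : (EuclideanSpace ℝ (Fin n)) × (EuclideanSpace ℝ (Fin n)), ∀ s ∈ Metric.ball t 1,
      HasDerivAt (fun s' => S.indicator (g s') p) (S.indicator (g' s) p) s := by
    refine Filter.Eventually.of_forall (fun p s _ => ?_)
    by_cases hp : p ∈ S
    · simp only [Set.indicator_of_mem hp]
      exact (hderiv' s p.1).mul (hderiv' s p.2)
    · simp only [Set.indicator_of_notMem hp]
      exact hasDerivAt_const s 0
  -- the main derivative result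
  have key := (hasDerivAt_integral_of_dominated_loc_of_deriv_le (μ := volume)
      (F := fun s => S.indicator (g s)) (F' := fun s => S.indicator (g' s))
      (bound := bound) (Metric.ball_mem_nhds t one_pos)
      (Filter.Eventually.of_forall (fun s => ((hg_cont s).aestronglyMeasurable).indicator hS_meas))
      ((hg_int t).indicator hS_meas)
      (((hg'_cont t).aestronglyMeasurable).indicator hS_meas)
      h_bound hbound_int h_diff).2
  -- rewrite the function
  have hfun : (fun s => ∫ p : (EuclideanSpace ℝ (Fin n)) × (EuclideanSpace ℝ (Fin n)),
      Set.indicator S (fun _ => (1 : ℝ)) p * (ρ s p.1 * ρ s p.2))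
      = fun s => ∫ p : (EuclideanSpace ℝ (Fin n)) × (EuclideanSpace ℝ (Fin n)), S.indicator (g s) p := by
    funext s
    congr 1
    funext p
    exact hind (g s) p
  -- value computation
  -- swap symmetry
  have hswap : ∫ p : (EuclideanSpace ℝ (Fin n)) × (EuclideanSpace ℝ (Fin n)), S.indicator B p = ∫ p : (EuclideanSpace ℝ (Fin n)) × (EuclideanSpace ℝ (Fin n)), S.indicator A p := by
    have h1 : ∀ p : (EuclideanSpace ℝ (Fin n)) × (EuclideanSpace ℝ (Fin n)), S.indicator B p = S.indicator A (Prod.swap p) := by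
      intro p
      have hmem : p ∈ S ↔ Prod.swap p ∈ S := by
        simp only [hS_def, Set.mem_setOf_eq, Prod.fst_swap, Prod.snd_swap]
        rw [norm_sub_rev]
      by_cases hp : p ∈ S
      · rw [Set.indicator_of_mem hp, Set.indicator_of_mem (hmem.1 hp)]
        simp [hA_def, hB_def, mul_comm]
      · rw [Set.indicator_of_notMem hp, Set.indicator_of_notMem (fun h => hp (hmem.2 h))]
    calc ∫ p : (EuclideanSpace ℝ (Fin n)) × (EuclideanSpace ℝ (Fin n)), S.indicator B p
        = ∫ p : (EuclideanSpace ℝ (Fin n)) × (EuclideanSpace ℝ (Fin n)), S.indicator A (Prod.swap p) := by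
          congr 1; funext p; exact h1 p
      _ = ∫ p : (EuclideanSpace ℝ (Fin n)) × (EuclideanSpace ℝ (Fin n)), S.indicator A p := by
          rw [show (volume : Measure ((EuclideanSpace ℝ (Fin n)) × (EuclideanSpace ℝ (Fin n)))) = Measure.prod volume volume from
            Measure.volume_eq_prod (EuclideanSpace ℝ (Fin n)) (EuclideanSpace ℝ (Fin n))]
          exact integral_prod_swap (S.indicator A)
  have hval : (-2 * ∫ p : (EuclideanSpace ℝ (Fin n)) × (EuclideanSpace ℝ (Fin n)),
      Set.indicator S (fun _ => (1 : ℝ)) p *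
        (ρ t p.2 * divergence n (fun y => ρ t y • u t y) p.1))
      = ∫ p : (EuclideanSpace ℝ (Fin n)) × (EuclideanSpace ℝ (Fin n)), S.indicator (g' t) p := by
    have hdiv : ∀ x : EuclideanSpace ℝ (Fin n), divergence n (fun y => ρ t y • u t y) x = -ρt t x := by
      intro x
      have := hpde t x
      linarith [this]
    have h2 : ∀ p : (EuclideanSpace ℝ (Fin n)) × (EuclideanSpace ℝ (Fin n)),
        Set.indicator S (fun _ => (1 : ℝ)) p *
          (ρ t p.2 * divergence n (fun y => ρ t y • u t y) p.1)
        = -(S.indicator A p) := by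
      intro p
      by_cases hp : p ∈ S
      · rw [Set.indicator_of_mem hp, Set.indicator_of_mem hp, hdiv]
        simp [hA_def]; ring
      · rw [Set.indicator_of_notMem hp, Set.indicator_of_notMem hp]
        simp
    have h3 : (∫ p : (EuclideanSpace ℝ (Fin n)) × (EuclideanSpace ℝ (Fin n)),
        Set.indicator S (fun _ => (1 : ℝ)) p *
          (ρ t p.2 * divergence n (fun y => ρ t y • u t y) p.1))
        = -∫ p : (EuclideanSpace ℝ (Fin n)) × (EuclideanSpace ℝ (Fin n)), S.indicator A p := by
      rw [← integral_neg]
      congr 1; funext p; rw [h2]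
    rw [h3]
    have h4 : ∀ p : (EuclideanSpace ℝ (Fin n)) × (EuclideanSpace ℝ (Fin n)), S.indicator (g' t) p = S.indicator A p + S.indicator B p := by
      intro p
      by_cases hp : p ∈ S <;> simp [hp, hg'_def, hA_def, hB_def]
    have h5 : (∫ p : (EuclideanSpace ℝ (Fin n)) × (EuclideanSpace ℝ (Fin n)), S.indicator (g' t) p)
        = (∫ p : (EuclideanSpace ℝ (Fin n)) × (EuclideanSpace ℝ (Fin n)), S.indicator A p) + ∫ p : (EuclideanSpace ℝ (Fin n)) × (EuclideanSpace ℝ (Fin n)), S.indicator B p := by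
      rw [← integral_add hA_int hB_int]
      congr 1; funext p; exact h4 p
    rw [h5, hswap]
    ring
  rw [hfun, hval]
  exact key
end

section
/- Let n ≥ 1. Let ρ : ℝ × ℝⁿ → ℝ and η : ℝⁿ → ℝ be continuously differentiable with ρ(t, x) > 0 and η(x) > 0 for all (t, x), and let u : ℝ × ℝⁿ → ℝⁿ be continuously differentiable with u(t, x) = 0 for all t and all x outside a fixed compact set K ⊆ ℝⁿ. Assume ∂_t ρ(t, x) + ∇·(ρ(t, x) u(t, x)) = 0 for all (t, x), and assume ∫_{ℝⁿ \ K} ρ(0, x) |log(ρ(0, x)/η(x))| dx < ∞. Then the function D(t) = ∫_{ℝⁿ} ρ(t, x) log(ρ(t, x)/η(x)) dx is well defined and differentiable in t, with D'(t) = ∫_{ℝⁿ} ( ∇ρ(t, x)/ρ(t, x) − ∇η(x)/η(x) ) · ρ(t, x) u(t, x) dx, where ∇ denotes the spatial gradient. -/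
open MeasureTheory Set
open scoped RealInnerProductSpace

section Aux

lemma divergence_of_eventually_zero {n : ℕ}
    {v : EuclideanSpace ℝ (Fin n) → EuclideanSpace ℝ (Fin n)}
    {x : EuclideanSpace ℝ (Fin n)} (h : v =ᶠ[nhds x] 0) : divergence n v x = 0 := by
  unfold divergence
  rw [h.fderiv_eq]
  have : fderiv ℝ (0 : EuclideanSpace ℝ (Fin n) → EuclideanSpace ℝ (Fin n)) x = 0 :=
    fderiv_const_apply 0
  rw [this]; simp

lemma euclid_decomp {n : ℕ} (y : EuclideanSpace ℝ (Fin n)) :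
    ∑ i, y i • EuclideanSpace.single i (1:ℝ) = y := by
  have := (EuclideanSpace.basisFun (Fin n) ℝ).toBasis.sum_repr y
  simpa [EuclideanSpace.basisFun_apply, EuclideanSpace.basisFun_repr] using this

lemma divergence_smul {n : ℕ} {g : EuclideanSpace ℝ (Fin n) → ℝ}
    {v : EuclideanSpace ℝ (Fin n) → EuclideanSpace ℝ (Fin n)}
    {x : EuclideanSpace ℝ (Fin n)} (hg : DifferentiableAt ℝ g x) (hv : DifferentiableAt ℝ v x) :
    divergence n (fun y => g y • v y) x = fderiv ℝ g x (v x) + g x * divergence n v x := by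
  unfold divergence
  rw [fderiv_fun_smul hg hv]
  have h1 : ∀ i : Fin n, ((g x • fderiv ℝ v x + (fderiv ℝ g x).smulRight (v x))
      (EuclideanSpace.single i 1)) i
      = g x * (fderiv ℝ v x (EuclideanSpace.single i 1)) i
        + fderiv ℝ g x (EuclideanSpace.single i 1) * (v x) i := by
    intro i
    simp [ContinuousLinearMap.add_apply, ContinuousLinearMap.smul_apply,
      ContinuousLinearMap.smulRight_apply, mul_comm]
  rw [Finset.sum_congr rfl (fun i _ => h1 i), Finset.sum_add_distrib, ← Finset.mul_sum]
  have h2 : ∑ i : Fin n, fderiv ℝ g x (EuclideanSpace.single i 1) * (v x) i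
      = fderiv ℝ g x (v x) := by
    conv_rhs => rw [← euclid_decomp (v x)]
    rw [map_sum]
    simp [mul_comm]
  rw [h2]; ring

lemma abs_coord_le_norm {n : ℕ} (y : EuclideanSpace ℝ (Fin n)) (i : Fin n) : |y i| ≤ ‖y‖ := by
  rw [EuclideanSpace.norm_eq]
  rw [show |y i| = Real.sqrt (|y i|^2) by rw [Real.sqrt_sq_eq_abs, abs_abs]]
  apply Real.sqrt_le_sqrt
  exact Finset.single_le_sum (f := fun j => |y j|^2) (fun j _ => sq_nonneg _) (Finset.mem_univ i)

lemma integral_divergence_compact_support {m : ℕ}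
    (W : EuclideanSpace ℝ (Fin (m+1)) → EuclideanSpace ℝ (Fin (m+1)))
    (hW : ContDiff ℝ 1 W) (K : Set (EuclideanSpace ℝ (Fin (m+1)))) (hK : IsCompact K)
    (h0 : ∀ x ∉ K, W x = 0) :
    ∫ x, divergence (m+1) W x = 0 := by
  obtain ⟨R₀, hR₀⟩ := hK.isBounded.subset_ball 0
  set R : ℝ := max R₀ 1 with hRdef
  have hR1 : (0:ℝ) < R := lt_of_lt_of_le one_pos (le_max_right _ _)
  have hKR : K ⊆ Metric.ball 0 R := hR₀.trans (Metric.ball_subset_ball (le_max_left _ _))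
  set eL : EuclideanSpace ℝ (Fin (m+1)) ≃L[ℝ] (Fin (m+1) → ℝ) :=
    EuclideanSpace.equiv (Fin (m+1)) ℝ with heL
  have hcoord : ∀ x ∈ K, ∀ i, |x i| < R := fun x hx i =>
    lt_of_le_of_lt (abs_coord_le_norm x i) (by simpa using hKR hx)
  set a : Fin (m+1) → ℝ := fun _ => -R with ha
  set b : Fin (m+1) → ℝ := fun _ => R with hb
  have hle : a ≤ b := fun i => by simp [ha, hb]; linarith
  set f : (Fin (m+1) → ℝ) → (Fin (m+1) → ℝ) := fun y => eL (W (eL.symm y)) with hf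
  set f' : (Fin (m+1) → ℝ) → (Fin (m+1) → ℝ) →L[ℝ] (Fin (m+1) → ℝ) := fun y =>
    ((eL : EuclideanSpace ℝ (Fin (m+1)) →L[ℝ] (Fin (m+1) → ℝ)).comp
      (fderiv ℝ W (eL.symm y))).comp
      ((eL.symm : (Fin (m+1) → ℝ) →L[ℝ] EuclideanSpace ℝ (Fin (m+1)))) with hf'
  have hWd : Differentiable ℝ W := hW.differentiable one_ne_zero
  have hd : ∀ y, HasFDerivAt f (f' y) y := by
    intro y
    have h1 : HasFDerivAt W (fderiv ℝ W (eL.symm y)) (eL.symm y) := (hWd _).hasFDerivAt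
    have h2 := h1.comp y (eL.symm.hasFDerivAt (x := y))
    exact (eL.hasFDerivAt.comp y h2 : _)
  have hdiv : ∀ y, (∑ i, f' y (Pi.single i 1) i) = divergence (m+1) W (eL.symm y) := by
    intro y
    unfold divergence
    congr 1
  have hfc : Continuous f := eL.continuous.comp (hW.continuous.comp eL.symm.continuous)
  have hdivc : Continuous fun y => ∑ i, f' y (Pi.single i 1) i := by
    apply continuous_finset_sum
    intro i _
    have h1 : Continuous fun y => fderiv ℝ W (eL.symm y) :=
      (hW.continuous_fderiv one_ne_zero).comp eL.symm.continuous
    have h2 : Continuous fun y => fderiv ℝ W (eL.symm y) (EuclideanSpace.single i 1) :=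
      h1.clm_apply continuous_const
    exact (continuous_apply i).comp ((eL.continuous.comp h2))
  have key := MeasureTheory.integral_divergence_of_hasFDerivAt_off_countable a b hle
    f f' ∅ countable_empty (hfc.continuousOn)
    (fun x _ => hd x)
    ((hdivc.continuousOn.integrableOn_compact isCompact_Icc))
  have hBzero : ∀ (i : Fin (m+1)) (c : ℝ), |c| = R →
      ∀ x : Fin m → ℝ, f (i.insertNth c x) i = 0 := by
    intro i c hc x
    have hmem : eL.symm (i.insertNth c x) ∉ K := by
      intro hmemK
      have := hcoord _ hmemK i
      have hco : (eL.symm (i.insertNth c x)) i = c := by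
        show ((i.insertNth c x : Fin (m+1) → ℝ)) i = c
        simp
      rw [hco, hc] at this
      exact lt_irrefl _ this
    show (eL (W (eL.symm (i.insertNth c x)))) i = 0
    rw [h0 _ hmem]
    simp
  have hRHS : (∑ i : Fin (m+1),
      ((∫ x in Icc (a ∘ i.succAbove) (b ∘ i.succAbove), f (i.insertNth (b i) x) i) -
        ∫ x in Icc (a ∘ i.succAbove) (b ∘ i.succAbove), f (i.insertNth (a i) x) i)) = 0 := by
    apply Finset.sum_eq_zero
    intro i _
    have h1 : ∀ x : Fin m → ℝ, f (i.insertNth (b i) x) i = 0 :=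
      fun x => hBzero i (b i) (by simp [hb, abs_of_pos hR1]) x
    have h2 : ∀ x : Fin m → ℝ, f (i.insertNth (a i) x) i = 0 :=
      fun x => hBzero i (a i) (by simp [ha, abs_of_pos hR1]) x
    simp only [h1, h2]
    simp
  rw [hRHS] at key
  have houtside : ∀ y ∉ Icc a b, (∑ i, f' y (Pi.single i 1) i) = 0 := by
    intro y hy
    rw [hdiv]
    apply divergence_of_eventually_zero
    have hymem : eL.symm y ∉ K := by
      intro hmemK
      apply hy
      have h3 : ∀ i, |y i| ≤ R := fun i => (hcoord _ hmemK i).le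
      exact ⟨fun i => by simpa [ha] using neg_le_of_abs_le (h3 i),
        fun i => by simpa [hb] using le_of_abs_le (h3 i)⟩
    filter_upwards [hK.isClosed.isOpen_compl.mem_nhds hymem] with z hz
    exact h0 z hz
  have hfull : ∫ y, (∑ i, f' y (Pi.single i 1) i) = 0 := by
    rw [← setIntegral_eq_integral_of_forall_compl_eq_zero houtside]
    exact key
  have hcv := ((EuclideanSpace.volume_preserving_symm_measurableEquiv_toLp (Fin (m+1))).symm).integral_comp
    (MeasurableEquiv.measurableEmbedding _) (fun x => divergence (m+1) W x)
  rw [← hcv]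
  rw [← hfull]
  apply integral_congr_ae
  filter_upwards with y
  exact (hdiv y).symm

end Aux

/-- Time derivative of the Kullback–Leibler divergence
`D(t) = ∫ ρ(t,x) log(ρ(t,x)/η(x)) dx` along the continuity equation
`∂_t ρ + ∇·(ρ u) = 0` with a compactly supported velocity field:
`D'(t) = ∫ (∇ρ/ρ − ∇η/η) · (ρ u) dx`. -/
theorem kl_divergence_time_derivative
    (n : ℕ) (hn : 1 ≤ n)
    (ρ : ℝ → EuclideanSpace ℝ (Fin n) → ℝ)
    (η : EuclideanSpace ℝ (Fin n) → ℝ)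
    (u : ℝ → EuclideanSpace ℝ (Fin n) → EuclideanSpace ℝ (Fin n))
    (hρ : ContDiff ℝ 1 (fun p : ℝ × EuclideanSpace ℝ (Fin n) => ρ p.1 p.2))
    (hη : ContDiff ℝ 1 η)
    (hu : ContDiff ℝ 1 (fun p : ℝ × EuclideanSpace ℝ (Fin n) => u p.1 p.2))
    (hρpos : ∀ (t : ℝ) (x : EuclideanSpace ℝ (Fin n)), 0 < ρ t x)
    (hηpos : ∀ x : EuclideanSpace ℝ (Fin n), 0 < η x)
    (K : Set (EuclideanSpace ℝ (Fin n))) (hK : IsCompact K)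
    (husupp : ∀ (t : ℝ) (x : EuclideanSpace ℝ (Fin n)), x ∉ K → u t x = 0)
    (hpde : ∀ (t : ℝ) (x : EuclideanSpace ℝ (Fin n)),
      deriv (fun s => ρ s x) t + divergence n (fun y => ρ t y • u t y) x = 0)
    (hint0 : IntegrableOn
      (fun x => ρ 0 x * |Real.log (ρ 0 x / η x)|) Kᶜ
      (volume : Measure (EuclideanSpace ℝ (Fin n)))) :
    ∀ t : ℝ,
      Integrable (fun x => ρ t x * Real.log (ρ t x / η x))
        (volume : Measure (EuclideanSpace ℝ (Fin n))) ∧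
      HasDerivAt (fun s => ∫ x, ρ s x * Real.log (ρ s x / η x))
        (∫ x, ⟪(ρ t x)⁻¹ • gradient (fun y => ρ t y) x - (η x)⁻¹ • gradient η x,
          ρ t x • u t x⟫) t := by
  obtain ⟨m, rfl⟩ : ∃ m, n = m + 1 := ⟨n - 1, (Nat.succ_pred_eq_of_pos hn).symm⟩
  have hηne : ∀ x, η x ≠ 0 := fun x => (hηpos x).ne'
  have hρne : ∀ s x, ρ s x ≠ 0 := fun s x => (hρpos s x).ne'
  have hlogdiv : ∀ s x, Real.log (ρ s x / η x) = Real.log (ρ s x) - Real.log (η x) :=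
    fun s x => Real.log_div (hρne s x) (hηne x)
  -- time differentiability of ρ
  have hρdiff : ∀ x, Differentiable ℝ (fun s => ρ s x) := by
    intro x
    have h : (fun s => ρ s x)
        = (fun p : ℝ × EuclideanSpace ℝ (Fin (m+1)) => ρ p.1 p.2) ∘ (fun s => (s, x)) := rfl
    rw [h]
    exact (hρ.differentiable one_ne_zero).comp (differentiable_id.prodMk (differentiable_const x))
  set ρ' : ℝ → EuclideanSpace ℝ (Fin (m+1)) → ℝ := fun s x => deriv (fun r => ρ r x) s with hρ'def
  have hρ'eq : ∀ s x, ρ' s x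
      = fderiv ℝ (fun p : ℝ × EuclideanSpace ℝ (Fin (m+1)) => ρ p.1 p.2) (s, x) (1, 0) := by
    intro s x
    have h1 : HasFDerivAt (fun p : ℝ × EuclideanSpace ℝ (Fin (m+1)) => ρ p.1 p.2)
        (fderiv ℝ (fun p : ℝ × EuclideanSpace ℝ (Fin (m+1)) => ρ p.1 p.2) (s, x)) (s, x) :=
      ((hρ.differentiable one_ne_zero) (s, x)).hasFDerivAt
    have h2 : HasDerivAt (fun r : ℝ => ((r, x) : ℝ × EuclideanSpace ℝ (Fin (m+1)))) (1, 0) s :=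
      (hasDerivAt_id s).prodMk (hasDerivAt_const s x)
    exact (h1.comp_hasDerivAt s h2).deriv
  have hρ'cont : Continuous fun p : ℝ × EuclideanSpace ℝ (Fin (m+1)) => ρ' p.1 p.2 := by
    have h : Continuous fun p : ℝ × EuclideanSpace ℝ (Fin (m+1)) =>
        fderiv ℝ (fun q : ℝ × EuclideanSpace ℝ (Fin (m+1)) => ρ q.1 q.2) p (1, 0) :=
      (hρ.continuous_fderiv one_ne_zero).clm_apply continuous_const
    have h2 : (fun p : ℝ × EuclideanSpace ℝ (Fin (m+1)) => ρ' p.1 p.2)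
        = fun p => fderiv ℝ (fun q : ℝ × EuclideanSpace ℝ (Fin (m+1)) => ρ q.1 q.2) p (1, 0) :=
      funext fun p => hρ'eq p.1 p.2
    rw [h2]; exact h
  -- off K, ρ is constant in time
  have hρ'zero : ∀ s x, x ∉ K → ρ' s x = 0 := by
    intro s x hx
    have hdivzero : divergence (m+1) (fun y => ρ s y • u s y) x = 0 := by
      apply divergence_of_eventually_zero
      filter_upwards [hK.isClosed.isOpen_compl.mem_nhds hx] with z hz
      simp [husupp s z hz]
    have hp := hpde s x
    rw [hdivzero] at hp
    simpa using hp
  have hρconst : ∀ x ∉ K, ∀ s, ρ s x = ρ 0 x := by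
    intro x hx s
    exact is_const_of_deriv_eq_zero (hρdiff x) (fun r => hρ'zero r x hx) s 0
  set F : ℝ → EuclideanSpace ℝ (Fin (m+1)) → ℝ :=
    fun s x => ρ s x * Real.log (ρ s x / η x) with hFdef
  set G : ℝ → EuclideanSpace ℝ (Fin (m+1)) → ℝ :=
    fun s x => ρ' s x * (Real.log (ρ s x / η x) + 1) with hGdef
  have hFderiv : ∀ s x, HasDerivAt (fun r => F r x) (G s x) s := by
    intro s x
    have hρx : HasDerivAt (fun r => ρ r x) (ρ' s x) s := ((hρdiff x) s).hasDerivAt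
    have hlog : HasDerivAt (fun r => Real.log (ρ r x)) (ρ' s x / ρ s x) s := hρx.log (hρne s x)
    have hmul : HasDerivAt (fun r => ρ r x * (Real.log (ρ r x) - Real.log (η x)))
        (ρ' s x * (Real.log (ρ s x) - Real.log (η x)) + ρ s x * (ρ' s x / ρ s x)) s :=
      hρx.mul (hlog.sub_const (Real.log (η x)))
    have hfun : (fun r => ρ r x * (Real.log (ρ r x) - Real.log (η x))) = fun r => F r x := by
      funext r
      rw [hFdef]
      simp only [hlogdiv r x]
    rw [hfun] at hmul
    convert hmul using 1
    rw [hGdef]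
    simp only [hlogdiv s x]
    have hc : ρ s x * (ρ' s x / ρ s x) = ρ' s x := by
      rw [mul_comm, div_mul_cancel₀ _ (hρne s x)]
    rw [hc]
    ring
  have hFcont : ∀ s, Continuous (F s) := by
    intro s
    have hρc : Continuous (fun x => ρ s x) :=
      hρ.continuous.comp (continuous_const.prodMk continuous_id)
    exact hρc.mul ((hρc.div hη.continuous fun x => hηne x).log
      fun x => div_ne_zero (hρne s x) (hηne x))
  have hFint : ∀ s, Integrable (F s)
      (volume : Measure (EuclideanSpace ℝ (Fin (m+1)))) := by
    intro s
    have honK : IntegrableOn (F s) K volume := (hFcont s).continuousOn.integrableOn_compact hK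
    have honKc : IntegrableOn (F s) Kᶜ volume := by
      apply Integrable.mono hint0 ((hFcont s).aestronglyMeasurable.restrict)
      rw [ae_restrict_iff' hK.measurableSet.compl]
      filter_upwards with x hx
      have h1 : ρ s x = ρ 0 x := hρconst x hx s
      have h2 : F s x = F 0 x := by rw [hFdef]; simp only [h1]
      rw [h2, Real.norm_eq_abs, Real.norm_eq_abs, abs_mul, abs_mul, abs_abs,
        abs_of_pos (hρpos 0 x)]
    have h := honK.union honKc
    rwa [union_compl_self, integrableOn_univ] at h
  have hGzero : ∀ s x, x ∉ K → G s x = 0 := by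
    intro s x hx
    rw [hGdef]
    simp only [hρ'zero s x hx, zero_mul]
  have hGcont : Continuous fun p : ℝ × EuclideanSpace ℝ (Fin (m+1)) => G p.1 p.2 := by
    have hρc : Continuous fun p : ℝ × EuclideanSpace ℝ (Fin (m+1)) => ρ p.1 p.2 := hρ.continuous
    have hηc : Continuous fun p : ℝ × EuclideanSpace ℝ (Fin (m+1)) => η p.2 :=
      hη.continuous.comp continuous_snd
    exact hρ'cont.mul (((hρc.div hηc fun p => hηne p.2).log
      fun p => div_ne_zero (hρne p.1 p.2) (hηne p.2)).add continuous_const)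
  intro t
  refine ⟨hFint t, ?_⟩
  -- dominated differentiation under the integral
  obtain ⟨C, hC⟩ := ((isCompact_Icc (a := t-1) (b := t+1)).prod hK).exists_bound_of_continuousOn
    hGcont.continuousOn
  set bound : EuclideanSpace ℝ (Fin (m+1)) → ℝ := K.indicator fun _ => C with hbdef
  have hboundint : Integrable bound volume := by
    rw [hbdef, integrable_indicator_iff hK.measurableSet]
    exact integrableOn_const hK.measure_lt_top.ne
  have h_bound : ∀ᵐ x ∂(volume : Measure (EuclideanSpace ℝ (Fin (m+1)))),
      ∀ s ∈ Metric.ball t 1, ‖G s x‖ ≤ bound x := by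
    filter_upwards with x
    intro s hs
    by_cases hx : x ∈ K
    · have hd := Metric.mem_ball.mp hs
      rw [Real.dist_eq] at hd
      have hd' := abs_lt.mp hd
      have hmem : (s, x) ∈ Icc (t-1) (t+1) ×ˢ K :=
        ⟨⟨by linarith [hd'.1], by linarith [hd'.2]⟩, hx⟩
      have := hC (s, x) hmem
      rwa [hbdef, indicator_of_mem hx]
    · rw [hGzero s x hx, hbdef, indicator_of_notMem hx]
      simp
  have hmain := hasDerivAt_integral_of_dominated_loc_of_deriv_le
      (F := F) (F' := G) (bound := bound) (Metric.ball_mem_nhds t one_pos)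
      (Filter.Eventually.of_forall fun s => (hFcont s).aestronglyMeasurable)
      (hFint t)
      ((hGcont.comp (continuous_const.prodMk continuous_id)).aestronglyMeasurable)
      h_bound hboundint
      (by filter_upwards with x; intro s _; exact hFderiv s x)
  -- integration by parts
  set V : EuclideanSpace ℝ (Fin (m+1)) → EuclideanSpace ℝ (Fin (m+1)) :=
    fun y => ρ t y • u t y with hVdef
  have hρtC1 : ContDiff ℝ 1 fun y => ρ t y := hρ.comp (contDiff_const.prodMk contDiff_id)
  have hutC1 : ContDiff ℝ 1 fun y => u t y := hu.comp (contDiff_const.prodMk contDiff_id)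
  have hVC1 : ContDiff ℝ 1 V := hρtC1.smul hutC1
  have hV0 : ∀ x, x ∉ K → V x = 0 := by
    intro x hx
    rw [hVdef]
    simp only [husupp t x hx, smul_zero]
  set g : EuclideanSpace ℝ (Fin (m+1)) → ℝ := fun y => Real.log (ρ t y / η y) + 1 with hgdef
  have hgC1 : ContDiff ℝ 1 g := by
    apply ContDiff.add _ contDiff_const
    exact (hρtC1.div hη fun x => hηne x).log fun x => div_ne_zero (hρne t x) (hηne x)
  set W : EuclideanSpace ℝ (Fin (m+1)) → EuclideanSpace ℝ (Fin (m+1)) :=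
    fun y => g y • V y with hWdef
  have hWC1 : ContDiff ℝ 1 W := hgC1.smul hVC1
  have hW0 : ∀ x, x ∉ K → W x = 0 := by
    intro x hx
    rw [hWdef]
    simp only [hV0 x hx, smul_zero]
  have hIBP := integral_divergence_compact_support W hWC1 K hK hW0
  have hdecomp : ∀ x, divergence (m+1) W x
      = fderiv ℝ g x (V x) + g x * divergence (m+1) V x :=
    fun x => divergence_smul (hgC1.differentiable one_ne_zero x) (hVC1.differentiable one_ne_zero x)
  have hA_cont : Continuous fun x => fderiv ℝ g x (V x) :=
    (hgC1.continuous_fderiv one_ne_zero).clm_apply hVC1.continuous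
  have hA_supp : HasCompactSupport fun x => fderiv ℝ g x (V x) := by
    apply HasCompactSupport.intro hK
    intro x hx
    rw [hV0 x hx]
    simp
  have hA_int : Integrable (fun x => fderiv ℝ g x (V x)) volume :=
    hA_cont.integrable_of_hasCompactSupport hA_supp
  have hdivV_cont : Continuous fun x => divergence (m+1) V x := by
    unfold divergence
    apply continuous_finset_sum
    intro i _
    have h1 : Continuous fun x => fderiv ℝ V x (EuclideanSpace.single i 1) :=
      (hVC1.continuous_fderiv one_ne_zero).clm_apply continuous_const
    exact (EuclideanSpace.proj i).continuous.comp h1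
  have hdivV_zero : ∀ x, x ∉ K → divergence (m+1) V x = 0 := by
    intro x hx
    apply divergence_of_eventually_zero
    filter_upwards [hK.isClosed.isOpen_compl.mem_nhds hx] with z hz
    exact hV0 z hz
  have hB_cont : Continuous fun x => g x * divergence (m+1) V x :=
    hgC1.continuous.mul hdivV_cont
  have hB_supp : HasCompactSupport fun x => g x * divergence (m+1) V x := by
    apply HasCompactSupport.intro hK
    intro x hx
    rw [hdivV_zero x hx, mul_zero]
  have hB_int : Integrable (fun x => g x * divergence (m+1) V x) volume :=
    hB_cont.integrable_of_hasCompactSupport hB_supp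
  have hsum : (∫ x, (fderiv ℝ g x (V x) + g x * divergence (m+1) V x)) = 0 := by
    rw [← integral_congr_ae (Filter.Eventually.of_forall hdecomp)]
    exact hIBP
  rw [integral_add hA_int hB_int] at hsum
  -- identify the derivative integrand
  have hGt : ∀ x, G t x = -(g x * divergence (m+1) V x) := by
    intro x
    have hp : deriv (fun s => ρ s x) t + divergence (m+1) V x = 0 := hpde t x
    have hρ't : ρ' t x = - divergence (m+1) V x := by
      have : ρ' t x = deriv (fun s => ρ s x) t := rfl
      rw [this]; linarith
    rw [hGdef]
    simp only [hρ't, hgdef]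
    ring
  have hGB : (∫ x, G t x) = ∫ x, fderiv ℝ g x (V x) := by
    have h1 : (∫ x, G t x) = ∫ x, -(g x * divergence (m+1) V x) :=
      integral_congr_ae (Filter.Eventually.of_forall hGt)
    rw [h1, integral_neg]
    linarith
  have hfinal : ∀ x, fderiv ℝ g x (V x)
      = ⟪(ρ t x)⁻¹ • gradient (fun y => ρ t y) x - (η x)⁻¹ • gradient η x, ρ t x • u t x⟫ := by
    intro x
    have hρtd : HasFDerivAt (fun y => ρ t y) (fderiv ℝ (fun y => ρ t y) x) x :=
      (hρtC1.differentiable one_ne_zero x).hasFDerivAt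
    have hηd : HasFDerivAt η (fderiv ℝ η x) x := (hη.differentiable one_ne_zero x).hasFDerivAt
    have h1 : HasFDerivAt (fun y => Real.log (ρ t y))
        ((ρ t x)⁻¹ • fderiv ℝ (fun y => ρ t y) x) x := hρtd.log (hρne t x)
    have h2 : HasFDerivAt (fun y => Real.log (η y))
        ((η x)⁻¹ • fderiv ℝ η x) x := hηd.log (hηne x)
    have h3 : HasFDerivAt g
        ((ρ t x)⁻¹ • fderiv ℝ (fun y => ρ t y) x - (η x)⁻¹ • fderiv ℝ η x) x := by
      have h4 := (h1.sub h2).add_const 1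
      have h5 : g = fun y => (Real.log (ρ t y) - Real.log (η y)) + 1 := by
        funext y
        rw [hgdef]
        simp only [hlogdiv t y]
      rw [h5]
      exact h4
    rw [h3.fderiv]
    have hgr : ∀ (f : EuclideanSpace ℝ (Fin (m+1)) → ℝ) (w : EuclideanSpace ℝ (Fin (m+1))),
        ⟪gradient f x, w⟫ = fderiv ℝ f x w := fun f w => InnerProductSpace.toDual_symm_apply
    rw [inner_sub_left, real_inner_smul_left, real_inner_smul_left, hgr, hgr]
    have hVx : V x = ρ t x • u t x := rfl
    rw [ContinuousLinearMap.sub_apply, ContinuousLinearMap.smul_apply,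
      ContinuousLinearMap.smul_apply, hVx]
    simp [smul_eq_mul]
  have hfinal_int : (∫ x, G t x)
      = ∫ x, ⟪(ρ t x)⁻¹ • gradient (fun y => ρ t y) x - (η x)⁻¹ • gradient η x,
          ρ t x • u t x⟫ := by
    rw [hGB]
    exact integral_congr_ae (Filter.Eventually.of_forall hfinal)
  exact hfinal_int ▸ hmain.2
end
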